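/- arXiv:1506.06526 — 3 statements merged into one kernel-verified Lean document; each statement's English description precedes it below -/
import Mathlib

section
/- For the complex unit vector φ_n = (1/√n)(1, ω, ω², …, ω^{n−1})ᵀ with ω = e^{2πi/n} and n ≥ 3, the quadratic form ⟨φ_n, (N_n − N_nᵀ) φ_n⟩ equals i·cot(π/n), where N_n is the strictly upper triangular all-ones matrix. -/
/-! With `v = (ω ^ j)_j`, the entries of `N v` and `Nᵀ v` are geometric sums, and `ω ^ n = 1`
gives `(N - Nᵀ) v = (2 • 𝟙 - (ω + 1) • v) / (ω - 1)` with `𝟙` the all-ones vector. Pairing with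
`v̄ = (ω⁻¹ ^ i)_i` kills the `𝟙` part, since `∑ ω⁻¹ ^ i = 0`, and leaves `-n (ω + 1) / (ω - 1)`;
after the normalisation `1 / n`, the identity `i cot z = (e^{2iz} + 1) / (1 - e^{2iz})` at
`z = π / n` finishes. -/

open Matrix Finset

def upperOnes (K : Type*) [Zero K] [One K] (n : ℕ) : Matrix (Fin n) (Fin n) K :=
  Matrix.of fun i j => if i < j then 1 else 0

section SumFin

variable {M : Type*} [AddCommMonoid M] {n : ℕ}

lemma Fin.sum_ite_lt_eq_sum_Ico (f : ℕ → M) (i : Fin n) :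
    ∑ j : Fin n, (if i < j then f j else 0) = ∑ j ∈ Ico ((i : ℕ) + 1) n, f j := by
  simp_rw [Fin.lt_def]
  rw [Fin.sum_univ_eq_sum_range (fun j => if (i : ℕ) < j then f j else 0), ← sum_filter]
  congr 1
  ext j
  simp only [mem_filter, mem_range, mem_Ico]
  omega

lemma Fin.sum_ite_gt_eq_sum_range (f : ℕ → M) (i : Fin n) :
    ∑ j : Fin n, (if j < i then f j else 0) = ∑ j ∈ range i, f j := by
  simp_rw [Fin.lt_def]
  rw [Fin.sum_univ_eq_sum_range (fun j => if j < (i : ℕ) then f j else 0), ← sum_filter]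
  congr 1
  ext j
  simp only [mem_filter, mem_range]
  omega

end SumFin

section Field

variable {K : Type*} [Field K] {n : ℕ} {ζ : K}

lemma upperOnes_mulVec_pow (hζ : ζ ≠ 1) (hζn : ζ ^ n = 1) :
    upperOnes K n *ᵥ (fun j => ζ ^ (j : ℕ))
      = fun i : Fin n => (1 - ζ ^ ((i : ℕ) + 1)) / (ζ - 1) := by
  ext i
  simp only [mulVec, dotProduct, upperOnes, of_apply, ite_mul, one_mul, zero_mul]
  rw [Fin.sum_ite_lt_eq_sum_Ico (ζ ^ ·), geom_sum_Ico hζ i.isLt, hζn]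

lemma upperOnes_transpose_mulVec_pow (hζ : ζ ≠ 1) :
    (upperOnes K n)ᵀ *ᵥ (fun j => ζ ^ (j : ℕ))
      = fun i : Fin n => (ζ ^ (i : ℕ) - 1) / (ζ - 1) := by
  ext i
  simp only [mulVec, dotProduct, transpose_apply, upperOnes, of_apply, ite_mul, one_mul,
    zero_mul]
  rw [Fin.sum_ite_gt_eq_sum_range (ζ ^ ·), geom_sum_eq hζ]

lemma upperOnes_sub_transpose_mulVec_pow (hζ : ζ ≠ 1) (hζn : ζ ^ n = 1) :
    (upperOnes K n - (upperOnes K n)ᵀ) *ᵥ (fun j => ζ ^ (j : ℕ))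
      = fun i : Fin n => (2 - (ζ + 1) * ζ ^ (i : ℕ)) / (ζ - 1) := by
  rw [sub_mulVec, upperOnes_mulVec_pow hζ hζn, upperOnes_transpose_mulVec_pow hζ]
  ext i
  simp only [Pi.sub_apply, pow_succ]
  ring

lemma IsPrimitiveRoot.inv_pow_dotProduct_upperOnes_sub_transpose_mulVec_pow
    (hζ : IsPrimitiveRoot ζ n) (hn : 1 < n) :
    (fun i : Fin n => ζ⁻¹ ^ (i : ℕ)) ⬝ᵥ
        ((upperOnes K n - (upperOnes K n)ᵀ) *ᵥ fun j => ζ ^ (j : ℕ))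
      = -(n * (ζ + 1) / (ζ - 1)) := by
  have hζ1 := hζ.ne_one hn
  rw [upperOnes_sub_transpose_mulVec_pow hζ1 hζ.pow_eq_one, dotProduct]
  have hterm : ∀ i : ℕ, ζ⁻¹ ^ i * ((2 - (ζ + 1) * ζ ^ i) / (ζ - 1))
      = 2 / (ζ - 1) * ζ⁻¹ ^ i - (ζ + 1) / (ζ - 1) := by
    intro i
    have : ζ⁻¹ ^ i * ζ ^ i = 1 := by
      rw [← mul_pow, inv_mul_cancel₀ (hζ.ne_zero (by omega)), one_pow]
    linear_combination (-(ζ + 1) / (ζ - 1)) * this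
  simp only [hterm]
  rw [Fin.sum_univ_eq_sum_range (fun i => 2 / (ζ - 1) * ζ⁻¹ ^ i - (ζ + 1) / (ζ - 1)),
    sum_sub_distrib, ← mul_sum, hζ.inv.geom_sum_eq_zero hn, sum_const, card_range,
    nsmul_eq_mul]
  ring

end Field

lemma Complex.I_mul_cot (z : ℂ) :
    I * cot z = (exp (2 * I * z) + 1) / (1 - exp (2 * I * z)) := by
  rw [cot_eq_exp_ratio, ← mul_div_assoc, mul_div_mul_left _ _ I_ne_zero]

open Complex in
/-- `⟨φ, (N − Nᵀ)φ⟩ = i cot(π/n)` for the Fourier vector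
`φ = (1/√n)(1, ω, …, ω^{n−1})`, `ω = e^{2πi/n}`, `n ≥ 3`. -/
theorem stmt_3 (n : ℕ) (hn : 3 ≤ n) (N : Matrix (Fin n) (Fin n) ℂ)
    (hN : ∀ i j : Fin n, N i j = if i < j then 1 else 0)
    (ω : ℂ) (hω : ω = Complex.exp (2 * Real.pi * Complex.I / n))
    (φ : Fin n → ℂ) (hφ : ∀ i : Fin n, φ i = (1 / Real.sqrt n : ℝ) * ω ^ (i : ℕ)) :
    dotProduct (star φ) ((N - Nᵀ).mulVec φ)
      = Complex.I * (Real.cos (Real.pi / n) / Real.sin (Real.pi / n)) := by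
  have hn0 : n ≠ 0 := by omega
  have hζ : IsPrimitiveRoot ω n := hω ▸ isPrimitiveRoot_exp n hn0
  set c : ℝ := 1 / Real.sqrt n with hc_def
  have hN' : N = upperOnes ℂ n := Matrix.ext hN
  have hφ' : φ = (c : ℂ) • fun j : Fin n => ω ^ (j : ℕ) := funext hφ
  have hstar : star φ = (c : ℂ) • fun i : Fin n => ω⁻¹ ^ (i : ℕ) := by
    rw [hφ', star_smul, Complex.star_def, Complex.conj_ofReal]
    ext i
    simp [inv_eq_conj (norm_eq_one_of_pow_eq_one hζ.pow_eq_one hn0)]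
  have hc : (c : ℂ) * c = (n : ℂ)⁻¹ := by
    rw [← ofReal_mul, ← ofReal_natCast, ← ofReal_inv, hc_def, one_div, ← mul_inv,
      Real.mul_self_sqrt n.cast_nonneg]
  have hcot :
      (Real.cos (Real.pi / n) / Real.sin (Real.pi / n) : ℂ) = cot (Real.pi / n : ℝ) := by
    rw [← ofReal_cot, Real.cot_eq_cos_div_sin, ofReal_div]
  have hexp : exp (2 * I * (Real.pi / n : ℝ)) = ω := by
    rw [hω]
    push_cast
    ring_nf
  rw [hstar, hN', hφ', mulVec_smul, smul_dotProduct, dotProduct_smul,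
    hζ.inv_pow_dotProduct_upperOnes_sub_transpose_mulVec_pow (by omega), smul_eq_mul, smul_eq_mul,
    ← mul_assoc, hc, hcot, I_mul_cot, hexp, ← neg_sub ω, div_neg, mul_div_assoc, mul_neg,
    inv_mul_cancel_left₀ (Nat.cast_ne_zero.mpr hn0)]
end

section
/- For the vector φ_n = (1/√n)(1, ω, …, ω^{n−1})ᵀ with ω = e^{2πi/n} and n ≥ 2, ⟨φ_n, N_n φ_n⟩ = 1/(ω̄ − 1), where N_n is the strictly upper triangular all-ones n×n matrix. -/
/-!
Write `c = ω̄`, so that `c ω = |ω|² = 1`. Then `⟨φ, Nφ⟩ = (1/n) ∑_{i<j<n} cⁱ ωʲ`. Multiplying the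
inner geometric sum by `c - 1` turns the `j`-th term into `(cʲ - 1) ωʲ = 1 - ωʲ`, and `∑_{j<n} ωʲ = 0`
because `ω` is a primitive `n`-th root of unity with `n ≥ 2`; hence the double sum is `n / (c - 1)`.
-/

open Finset Matrix

theorem sum_range_ite_lt {M : Type*} [AddCommMonoid M] {n j : ℕ} (h : j ≤ n) (f : ℕ → M) :
    ∑ i ∈ range n, (if i < j then f i else 0) = ∑ i ∈ range j, f i := by
  rw [← sum_filter]
  congr 1
  ext i
  simp only [mem_filter, mem_range]
  omega

theorem dotProduct_mulVec_of_strictUpper_ones {R : Type*} [Semiring R] {n : ℕ}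
    {N : Matrix (Fin n) (Fin n) R} (hN : ∀ i j, N i j = if i < j then 1 else 0) (u v : ℕ → R) :
    (fun i : Fin n => u i) ⬝ᵥ N *ᵥ (fun j : Fin n => v j) =
      ∑ j ∈ range n, ∑ i ∈ range j, u i * v j := by
  simp only [dotProduct, mulVec, hN, ite_mul, one_mul, zero_mul, mul_sum, mul_ite, mul_zero,
    Fin.lt_def]
  rw [sum_comm,
    Fin.sum_univ_eq_sum_range (fun j => ∑ i : Fin n, if (i : ℕ) < j then u i * v j else 0)]
  refine sum_congr rfl fun j hj => ?_
  rw [Fin.sum_univ_eq_sum_range (fun i => if i < j then u i * v j else 0),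
    sum_range_ite_lt (mem_range.1 hj).le]

theorem sum_range_sum_range_pow_mul_pow {K : Type*} [Field K] {c ω : K} {n : ℕ}
    (hcω : c * ω = 1) (hc : c ≠ 1) (hω : ∑ j ∈ range n, ω ^ j = 0) :
    ∑ j ∈ range n, ∑ i ∈ range j, c ^ i * ω ^ j = n / (c - 1) := by
  have hterm : ∀ j, (∑ i ∈ range j, c ^ i * ω ^ j) * (c - 1) = 1 - ω ^ j := fun j => by
    rw [← sum_mul, mul_right_comm, geom_sum_mul, sub_mul, ← mul_pow, hcω, one_pow, one_mul]
  rw [eq_div_iff (sub_ne_zero.2 hc), sum_mul]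
  simp [hterm, sum_sub_distrib, hω]

theorem Complex.conj_mul_eq_one_of_pow_eq_one {ω : ℂ} {n : ℕ} (h : ω ^ n = 1) (hn : n ≠ 0) :
    starRingEnd ℂ ω * ω = 1 := by
  rw [Complex.conj_mul', Complex.norm_eq_one_of_pow_eq_one h hn]
  simp

/-- `⟨φ, Nφ⟩ = 1/(ω̄ − 1)` for the Fourier vector
`φ = (1/√n)(1, ω, …, ω^{n−1})`, `ω = e^{2πi/n}`, `n ≥ 2`. -/
theorem stmt_4 (n : ℕ) (hn : 2 ≤ n) (N : Matrix (Fin n) (Fin n) ℂ)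
    (hN : ∀ i j : Fin n, N i j = if i < j then 1 else 0)
    (ω : ℂ) (hω : ω = Complex.exp (2 * Real.pi * Complex.I / n))
    (φ : Fin n → ℂ) (hφ : ∀ i : Fin n, φ i = (1 / Real.sqrt n : ℝ) * ω ^ (i : ℕ)) :
    dotProduct (star φ) (N.mulVec φ) = 1 / (starRingEnd ℂ ω - 1) := by
  have hprim : IsPrimitiveRoot ω n := hω ▸ Complex.isPrimitiveRoot_exp n (by omega)
  have hc1 : starRingEnd ℂ ω ≠ 1 :=
    (map_ne_one_iff _ (RingHom.injective _)).2 (hprim.ne_one (by omega))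
  have hn0 : (n : ℂ) ≠ 0 := by exact_mod_cast (by omega : n ≠ 0)
  have hscale : ((1 / √n : ℝ) : ℂ) * ((1 / √n : ℝ) : ℂ) = 1 / n := by
    rw [← Complex.ofReal_mul, div_mul_div_comm, one_mul, Real.mul_self_sqrt n.cast_nonneg]
    simp
  have hφ' : φ = ((1 / √n : ℝ) : ℂ) • fun i : Fin n => ω ^ (i : ℕ) := funext hφ
  have hstar : star φ = ((1 / √n : ℝ) : ℂ) • fun i : Fin n => starRingEnd ℂ ω ^ (i : ℕ) := by
    ext i
    simp [hφ]
  rw [hstar, hφ', mulVec_smul, smul_dotProduct, dotProduct_smul, smul_eq_mul, smul_eq_mul,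
    ← mul_assoc, hscale, dotProduct_mulVec_of_strictUpper_ones hN,
    sum_range_sum_range_pow_mul_pow
      (Complex.conj_mul_eq_one_of_pow_eq_one hprim.pow_eq_one (by omega)) hc1
      (hprim.geom_sum_eq_zero (by omega))]
  field_simp
end

section
/- Let A, B be real symmetric 2k×2k matrices with B ⪰ 0 and (A − B) + (i/2)J_{2k} ⪰ 0, where J_{2k} = ⊕ₖ [[0,1],[−1,0]]. Then for every n ≥ 1 the 2kn×2kn matrix Σ_n(A,B) = A ⊗ I_n + B ⊗ (N_n + N_nᵀ) satisfies Σ_n(A,B) + (i/2) J_{2k} ⊗ I_n ⪰ 0, where N_n is the strictly upper triangular all-ones n×n matrix. -/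
open Matrix

open scoped ComplexOrder

open Kronecker

/-! Since `N + Nᵀ = 𝟙𝟙ᵀ - I`, the matrix in question is
`((A - B) + (i/2) J) ⊗ I + B ⊗ 𝟙𝟙ᵀ`, a sum of Kronecker products of positive semidefinite
matrices. -/

namespace Matrix

lemma PosSemidef.map_ofReal {m : Type*} [Fintype m] {M : Matrix m m ℝ} (hM : M.PosSemidef) :
    (M.map Complex.ofReal).PosSemidef := by
  classical
  open scoped MatrixOrder Matrix.Norms.L2Operator in
  obtain ⟨L, rfl⟩ := CStarAlgebra.nonneg_iff_eq_star_mul_self.mp hM.nonneg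
  have hmap : (star L * L).map Complex.ofReal = (L.map Complex.ofReal)ᴴ * L.map Complex.ofReal := by
    rw [star_eq_conjTranspose, ← conjTranspose_map _ (fun _ => by simp)]
    exact Matrix.map_mul (f := Complex.ofRealHom)
  exact hmap ▸ posSemidef_conjTranspose_mul_self _

lemma add_transpose_add_one_eq_vecMulVec {ι R : Type*} [LinearOrder ι] [DecidableEq ι] [Ring R]
    (N : Matrix ι ι R) (hN : ∀ i j, N i j = if i < j then 1 else 0) :
    N + Nᵀ + 1 = vecMulVec 1 1 := by
  ext i j
  simp only [add_apply, transpose_apply, vecMulVec_apply, Pi.one_apply, mul_one, one_apply, hN]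
  rcases lt_trichotomy i j with h | rfl | h
  · simp [h, h.not_gt, h.ne]
  · simp
  · simp [h, h.not_gt, h.ne']

end Matrix

theorem stmt_7_general (k : ℕ) (A B J : Matrix (Fin (2 * k)) (Fin (2 * k)) ℝ)
    (hBpos : B.PosSemidef)
    (hAB : ((A - B).map Complex.ofReal
      + (Complex.I / 2) • J.map Complex.ofReal).PosSemidef) :
    ∀ n : ℕ, 1 ≤ n → ∀ N : Matrix (Fin n) (Fin n) ℝ,
      (∀ i j : Fin n, N i j = if i < j then 1 else 0) →
      ((A.map Complex.ofReal) ⊗ₖ (1 : Matrix (Fin n) (Fin n) ℂ)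
        + (B.map Complex.ofReal) ⊗ₖ ((N + Nᵀ).map Complex.ofReal)
        + (Complex.I / 2) •
          ((J.map Complex.ofReal) ⊗ₖ (1 : Matrix (Fin n) (Fin n) ℂ))).PosSemidef := by
  intro n _ N hN
  have hsplit : (A.map Complex.ofReal) ⊗ₖ (1 : Matrix (Fin n) (Fin n) ℂ)
        + (B.map Complex.ofReal) ⊗ₖ ((N + Nᵀ).map Complex.ofReal)
        + (Complex.I / 2) • ((J.map Complex.ofReal) ⊗ₖ (1 : Matrix (Fin n) (Fin n) ℂ))
      = ((A - B).map Complex.ofReal + (Complex.I / 2) • J.map Complex.ofReal) ⊗ₖ 1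
        + (B.map Complex.ofReal) ⊗ₖ vecMulVec 1 1 := by
    have hN' : (N + Nᵀ).map Complex.ofReal + 1 = vecMulVec 1 1 := by
      rw [Matrix.map_add _ Complex.ofReal_add, transpose_map]
      exact add_transpose_add_one_eq_vecMulVec _ fun i j => by simp [hN, apply_ite]
    have hA' : A.map Complex.ofReal = (A - B).map Complex.ofReal + B.map Complex.ofReal := by
      rw [Matrix.map_sub _ Complex.ofReal_sub, sub_add_cancel]
    rw [← hN', hA', add_kronecker, add_kronecker, kronecker_add, smul_kronecker]
    abel
  rw [hsplit]
  exact (hAB.kronecker .one).add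
    (hBpos.map_ofReal.kronecker (by simpa using posSemidef_vecMulVec_star_self (1 : Fin n → ℂ)))

/-- If `B ⪰ 0` and `(A−B) + (i/2)J ⪰ 0`, then
`Σ_n(A,B) + (i/2) J ⊗ I_n = A ⊗ I_n + B ⊗ (N + Nᵀ) + (i/2) J ⊗ I_n ⪰ 0` for all `n ≥ 1`. -/
theorem stmt_7 (k : ℕ) (A B J : Matrix (Fin (2 * k)) (Fin (2 * k)) ℝ)
    (hA : A.IsSymm) (hB : B.IsSymm)
    (hJ : ∀ i j : Fin (2 * k), J i j =
      if (j : ℕ) = (i : ℕ) + 1 ∧ Even (i : ℕ) then 1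
      else if (i : ℕ) = (j : ℕ) + 1 ∧ Even (j : ℕ) then -1 else 0)
    (hBpos : B.PosSemidef)
    (hAB : ((A - B).map Complex.ofReal
      + (Complex.I / 2) • J.map Complex.ofReal).PosSemidef) :
    ∀ n : ℕ, 1 ≤ n → ∀ N : Matrix (Fin n) (Fin n) ℝ,
      (∀ i j : Fin n, N i j = if i < j then 1 else 0) →
      ((A.map Complex.ofReal) ⊗ₖ (1 : Matrix (Fin n) (Fin n) ℂ)
        + (B.map Complex.ofReal) ⊗ₖ ((N + Nᵀ).map Complex.ofReal)
        + (Complex.I / 2) •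
          ((J.map Complex.ofReal) ⊗ₖ (1 : Matrix (Fin n) (Fin n) ℂ))).PosSemidef :=
  stmt_7_general k A B J hBpos hAB
end
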